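/- Let M and N be positive integers and let v_1, …, v_M : Fin N → ℂ be unit vectors. Let V be a unitary (M+1)×(M+1) complex matrix whose first column satisfies |V_{00}|² = 1/2 and |V_{j0}|² = 1/(2M) for all j ≥ 1. For each p ∈ {1,…,M} set w_0^{(p)} = −v_p and w_j^{(p)} = v_j for j ≥ 1, and define Ψ : Fin (M+1) × Fin M × Fin N → ℂ by Ψ(q,p,n) = (1/√M)·Σ_{j=0}^{M} conj(V_{jq})·V_{j0}·w_j^{(p)}(n). Then the probability of measuring outcome 0 on the first register satisfies Σ_{p,n} |Ψ(0,p,n)|² = (1/(4M))·Σ_{p=1}^{M} ‖v_p − (1/M)·Σ_{j=1}^{M} v_j‖². That is, the mean squared Euclidean distance of the v_p from their centroid equals four times this success probability. -/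

import Mathlib

/-!
For `q = 0` the coefficients `conj(V_{j0}) V_{j0} = |V_{j0}|²` are `1/2` for `j = 0` and `1/(2M)`
otherwise, so with `c` the centroid, `Ψ(0, p, ·) = (1/√M) (-(1/2) v_p + (1/2) c) = -(1/(2√M)) (v_p - c)`.
Summing `|Ψ(0, p, n)|²` over `n` gives `‖v_p - c‖² / (4M)`.
-/

open Finset

theorem weighted_sum_eq_neg_half_smul_sub_centroid {E : Type*} [AddCommGroup E] [Module ℂ E]
    {M : ℕ} (c : Fin (M + 1) → ℂ) (hc0 : c 0 = 1 / 2) (hcs : ∀ j : Fin M, c j.succ = 1 / (2 * M))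
    (x : E) (v : Fin M → E) (w : Fin (M + 1) → E) (hw0 : w 0 = -x) (hws : ∀ j, w j.succ = v j) :
    ∑ j, c j • w j = -(1 / 2 : ℂ) • (x - (M : ℂ)⁻¹ • ∑ j, v j) := by
  simp only [Fin.sum_univ_succ, hc0, hw0, hcs, hws, ← smul_sum, one_div, mul_inv, mul_smul]
  module

theorem norm_sq_inv_sqrt_mul_neg_half (M : ℕ) :
    ‖((Real.sqrt M)⁻¹ : ℂ) * -(1 / 2)‖ ^ 2 = 1 / (4 * M) := by
  rw [norm_mul, mul_pow, norm_inv, Complex.norm_real, Real.norm_of_nonneg (Real.sqrt_nonneg _),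
    inv_pow, Real.sq_sqrt M.cast_nonneg]
  norm_num

theorem stmt_9_general (M N : ℕ)
    (v : Fin M → EuclideanSpace ℂ (Fin N))
    (V : Matrix (Fin (M + 1)) (Fin (M + 1)) ℂ)
    (hV00 : ‖V 0 0‖ ^ 2 = 1 / 2)
    (hVj0 : ∀ j : Fin (M + 1), j ≠ 0 → ‖V j 0‖ ^ 2 = 1 / (2 * M))
    (w : Fin M → Fin (M + 1) → EuclideanSpace ℂ (Fin N))
    (hw0 : ∀ p, w p 0 = -(v p)) (hws : ∀ p (j : Fin M), w p j.succ = v j)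
    (Ψ : EuclideanSpace ℂ (Fin (M + 1) × Fin M × Fin N))
    (hΨ : ∀ q p n, Ψ (q, p, n) =
      ((Real.sqrt M)⁻¹ : ℂ) * ∑ j, starRingEnd ℂ (V j q) * V j 0 * w p j n) :
    (∑ p, ∑ n, ‖Ψ (0, p, n)‖ ^ 2) =
      (1 / (4 * M)) * ∑ p, ‖v p - ((M : ℂ))⁻¹ • ∑ j, v j‖ ^ 2 := by
  have hcentroid (p : Fin M) :
      ∑ j, ((‖V j 0‖ ^ 2 : ℝ) : ℂ) • w p j = -(1 / 2 : ℂ) • (v p - (M : ℂ)⁻¹ • ∑ j, v j) :=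
    weighted_sum_eq_neg_half_smul_sub_centroid _ (by simp [hV00])
      (fun j ↦ by simp [hVj0 j.succ j.succ_ne_zero]) _ _ _ (hw0 p) (hws p)
  have hrow (p : Fin M) (n : Fin N) : Ψ (0, p, n) =
      ((Real.sqrt M)⁻¹ : ℂ) * -(1 / 2) * (v p - (M : ℂ)⁻¹ • ∑ j, v j) n := by
    rw [hΨ, mul_assoc, ← smul_eq_mul (-(1 / 2 : ℂ)), ← PiLp.smul_apply, ← hcentroid p]
    simp [Complex.conj_mul']
  simp only [hrow, norm_mul (((Real.sqrt M)⁻¹ : ℂ) * -(1 / 2)), mul_pow,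
    norm_sq_inv_sqrt_mul_neg_half, ← mul_sum, ← EuclideanSpace.norm_sq_eq]

/-- Intra-cluster variance circuit: the success probability of measuring `0` on the first
register equals `1/(4M)` times the sum of squared distances of the `v_p` from their centroid. -/
theorem stmt_9 (M N : ℕ) (hM : 0 < M) (hN : 0 < N)
    (v : Fin M → EuclideanSpace ℂ (Fin N)) (hv : ∀ p, ‖v p‖ = 1)
    (V : Matrix (Fin (M + 1)) (Fin (M + 1)) ℂ)
    (hV : V ∈ Matrix.unitaryGroup (Fin (M + 1)) ℂ)
    (hV00 : ‖V 0 0‖ ^ 2 = 1 / 2)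
    (hVj0 : ∀ j : Fin (M + 1), j ≠ 0 → ‖V j 0‖ ^ 2 = 1 / (2 * M))
    (w : Fin M → Fin (M + 1) → EuclideanSpace ℂ (Fin N))
    (hw0 : ∀ p, w p 0 = -(v p)) (hws : ∀ p (j : Fin M), w p j.succ = v j)
    (Ψ : EuclideanSpace ℂ (Fin (M + 1) × Fin M × Fin N))
    (hΨ : ∀ q p n, Ψ (q, p, n) =
      ((Real.sqrt M)⁻¹ : ℂ) * ∑ j, starRingEnd ℂ (V j q) * V j 0 * w p j n) :
    (∑ p, ∑ n, ‖Ψ (0, p, n)‖ ^ 2) =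
      (1 / (4 * M)) * ∑ p, ‖v p - ((M : ℂ))⁻¹ • ∑ j, v j‖ ^ 2 :=
  stmt_9_general M N v V hV00 hVj0 w hw0 hws Ψ hΨ
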